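/- arXiv:1912.09984 — 2 statements merged into one kernel-verified Lean document; each statement's English description precedes it below -/
import Mathlib

section
/- Let C be an F-linear subspace of F^n and L ∈ P(K^n). Then dim_F Π_L(C) = Rk(L) − dim_F(C⊥ ∩ V_L), where Π_L : F^n → F^{Rk(L)} is the projection map associated to L and V_L is the sum-rank support space of L. -/
open Module

/-! Setup for sum-rank metric codes and sum-matroids.

We fix `ℓ` finite fields `K i` with a common extension `F` (given by algebra
structures), and block lengths `nv i`.  The ambient space `F^n` (with
`n = ∑ i, nv i`) is modelled as the dependent product of the blocks `F^{nv i}`,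
and an element of the product lattice `P(K^n)` is a tuple of `K i`-subspaces of
`K i ^ (nv i)`. -/

/-- The ambient space `F^n`, split into `ℓ` blocks of sizes `nv i`. -/
abbrev SRAmb (ℓ : ℕ) (nv : Fin ℓ → ℕ) (F : Type) : Type :=
  (i : Fin ℓ) → Fin (nv i) → F

/-- The product lattice `P(K^n)`: tuples `L` where `L i` is a `K i`-subspace of
`K i ^ (nv i)`. -/
abbrev SRLat (ℓ : ℕ) (nv : Fin ℓ → ℕ) (K : Fin ℓ → Type) [∀ i, Field (K i)] : Type :=
  (i : Fin ℓ) → Submodule (K i) (Fin (nv i) → K i)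

variable {ℓ : ℕ} {nv : Fin ℓ → ℕ} {F : Type} [Field F]
  {K : Fin ℓ → Type} [∀ i, Field (K i)] [∀ i, Algebra (K i) F]

/-- `Rk(L) = ∑ i, dim_{K i} (L i)`. -/
noncomputable def SRrk (L : SRLat ℓ nv K) : ℕ := ∑ i, finrank (K i) (L i)

/-- Orthogonal complement of a subspace of `k^m` with respect to the standard
dot product. -/
def SRorth {k : Type} [Field k] {m : ℕ} (W : Submodule k (Fin m → k)) :
    Submodule k (Fin m → k) where
  carrier := {v | ∀ w ∈ W, ∑ t, v t * w t = 0}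
  zero_mem' := by intro w hw; simp
  add_mem' := by
    intro a b ha hb w hw
    have h : ∑ t, (a + b) t * w t = (∑ t, a t * w t) + ∑ t, b t * w t := by
      simp [add_mul, Finset.sum_add_distrib]
    rw [h, ha w hw, hb w hw, add_zero]
  smul_mem' := by
    intro c a ha w hw
    have h : ∑ t, (c • a) t * w t = c * ∑ t, a t * w t := by
      simp [Finset.mul_sum, mul_assoc]
    rw [h, ha w hw, mul_zero]

/-- Componentwise orthogonal complement `L^⊥` in the lattice `P(K^n)`. -/
def SRlatPerp (L : SRLat ℓ nv K) : SRLat ℓ nv K := fun i => SRorth (L i)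

/-- The `i`-th component of the sum-rank support of `c ∈ F^n`: the `K i`-row
space of the coordinate matrix of the `i`-th block of `c` (described
basis-freely as the span of the images of the block of `c` under all
`K i`-linear functionals `F → K i`). -/
def SRsupp (c : SRAmb ℓ nv F) (i : Fin ℓ) : Submodule (K i) (Fin (nv i) → K i) :=
  Submodule.span (K i) {v | ∃ f : F →ₗ[K i] K i, v = fun t => f (c i t)}

/-- The sum-rank weight `srank(c) = Rk(supp(c))`. -/
noncomputable def SRwt (c : SRAmb ℓ nv F) : ℕ :=
  ∑ i, finrank (K i) (SRsupp (K := K) c i)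

/-- The sum-rank support space `V_L = {c ∈ F^n : supp(c) ⊆ L}`. -/
def SRVL (L : SRLat ℓ nv K) : Submodule F (SRAmb ℓ nv F) where
  carrier := {c | ∀ i, SRsupp (K := K) c i ≤ L i}
  zero_mem' := by
    intro i
    apply Submodule.span_le.mpr
    rintro v ⟨f, rfl⟩
    have h : (fun t => f ((0 : SRAmb ℓ nv F) i t)) = (0 : Fin (nv i) → K i) := by
      funext t; simp
    rw [h]
    exact (L i).zero_mem
  add_mem' := by
    intro a b ha hb i
    apply Submodule.span_le.mpr
    rintro v ⟨f, rfl⟩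
    have h : (fun t => f ((a + b) i t)) =
        (fun t => f (a i t)) + fun t => f (b i t) := by
      funext t; simp
    rw [h]
    exact (L i).add_mem (ha i (Submodule.subset_span ⟨f, rfl⟩))
      (hb i (Submodule.subset_span ⟨f, rfl⟩))
  smul_mem' := by
    intro x a ha i
    apply Submodule.span_le.mpr
    rintro v ⟨f, rfl⟩
    have h : (fun t => f ((x • a) i t)) =
        fun t => (f.comp (LinearMap.mulLeft (K i) x)) (a i t) := by
      funext t; simp [smul_eq_mul]
    rw [h]
    exact ha i (Submodule.subset_span ⟨_, rfl⟩)

/-- The dual code `C^⊥` with respect to the standard bilinear form on `F^n`. -/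
def SRdual (C : Submodule F (SRAmb ℓ nv F)) : Submodule F (SRAmb ℓ nv F) where
  carrier := {x | ∀ c ∈ C, ∑ i, ∑ t, x i t * c i t = 0}
  zero_mem' := by intro c hc; simp
  add_mem' := by
    intro a b ha hb c hc
    have h : ∑ i, ∑ t, (a + b) i t * c i t =
        (∑ i, ∑ t, a i t * c i t) + ∑ i, ∑ t, b i t * c i t := by
      simp [add_mul, Finset.sum_add_distrib]
    rw [h, ha c hc, hb c hc, add_zero]
  smul_mem' := by
    intro x a ha c hc
    have h : ∑ i, ∑ t, (x • a) i t * c i t = x * ∑ i, ∑ t, a i t * c i t := by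
      simp [Finset.mul_sum, mul_assoc]
    rw [h, ha c hc, mul_zero]

/-- `C(L) = {c ∈ C^⊥ : supp(c) ⊆ L^⊥} = C^⊥ ∩ V_{L^⊥}`. -/
def SRCL (C : Submodule F (SRAmb ℓ nv F)) (L : SRLat ℓ nv K) :
    Submodule F (SRAmb ℓ nv F) :=
  SRdual C ⊓ SRVL (SRlatPerp L)

/-- The projection `Π_L : F^n → F^{Rk L}`, `x ↦ x Aᵀ`, where
`A = diag(A_1, …, A_ℓ)` and `A_i` is the matrix whose rows are the chosen basis
of `L i` over `K i`.  The target `F^{Rk L}` is indexed blockwise. -/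
noncomputable def SRpi (L : SRLat ℓ nv K) :
    SRAmb ℓ nv F →ₗ[F] ((i : Fin ℓ) → Fin (finrank (K i) (L i)) → F) where
  toFun x := fun i j =>
    ∑ t, x i t * algebraMap (K i) F ((Module.finBasis (K i) (L i) j).val t)
  map_add' x y := by
    funext i j
    simp [add_mul, Finset.sum_add_distrib]
  map_smul' a x := by
    funext i j
    simp [Finset.mul_sum, mul_assoc]

/-- The rank function `ρ_C(L) = dim_F Π_L(C^⊥)` of the sum-matroid associated
to the code `C`. -/
noncomputable def SRrho (C : Submodule F (SRAmb ℓ nv F)) (L : SRLat ℓ nv K) : ℕ :=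
  finrank F (Submodule.map (SRpi (F := F) L) (SRdual C))

/-- Minimum sum-rank distance of a code. -/
noncomputable def SRminDist (K : Fin ℓ → Type) [∀ i, Field (K i)]
    [∀ i, Algebra (K i) F] (C : Submodule F (SRAmb ℓ nv F)) : ℕ :=
  sInf {w | ∃ c ∈ C, c ≠ 0 ∧ SRwt (K := K) c = w}

/-- The `r`-th generalized sum-rank weight
`d_{SR,r}(C) = min{Rk L : dim_F (C ∩ V_L) ≥ r}`. -/
noncomputable def SRdgw (K : Fin ℓ → Type) [∀ i, Field (K i)]
    [∀ i, Algebra (K i) F] (C : Submodule F (SRAmb ℓ nv F)) (r : ℕ) : ℕ :=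
  sInf {w | ∃ L : SRLat ℓ nv K, r ≤ finrank F ↥(C ⊓ SRVL L) ∧ SRrk L = w}

/-- The sum-matroid axioms (R1), (R2), (R3) for a function `ρ : P(K^n) → ℕ`. -/
def IsSumMatroid (ρ : SRLat ℓ nv K → ℕ) : Prop :=
  (∀ L, ρ L ≤ SRrk L) ∧
  (∀ L L' : SRLat ℓ nv K, L ≤ L' → ρ L ≤ ρ L') ∧
  (∀ L L' : SRLat ℓ nv K, ρ (L ⊔ L') + ρ (L ⊓ L') ≤ ρ L + ρ L')

/-- The dual rank function `ρ*(L) = ρ(L^⊥) + Rk L − ρ(K^n)`. -/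
noncomputable def SRdualRk (ρ : SRLat ℓ nv K → ℕ) (L : SRLat ℓ nv K) : ℕ :=
  ρ (SRlatPerp L) + SRrk L - ρ ⊤

/-- The nullity function `η(L) = Rk L − ρ(L)`. -/
noncomputable def SReta (ρ : SRLat ℓ nv K → ℕ) (L : SRLat ℓ nv K) : ℕ :=
  SRrk L - ρ L

/-- The `i`-th generalized weight of a sum-matroid,
`d_i(M) = min{Rk L : η(L) = i}`. -/
noncomputable def SRgw (ρ : SRLat ℓ nv K → ℕ) (i : ℕ) : ℕ :=
  sInf {w | ∃ L : SRLat ℓ nv K, SReta ρ L = i ∧ SRrk L = w}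

/-! The transpose of `Π_L` is the map `ψ : y ↦ y A`. It is injective because the rows of each
`A_i` stay linearly independent over `F`, and its image is `V_L`: a block of `F`-entries lies in
the `F`-row space of `A_i` exactly when every `K_i`-linear functional `F → K_i` maps it into the
`K_i`-row space `L_i`, since a right inverse of `A_i` over `K_i` projects onto `L_i`. Adjointness
of `Π_L` and `ψ` for the dot products gives `C⊥ ∩ V_L = ψ(Π_L(C)⊥)`, and for the nondegenerate
dot product on `F^{Rk L}` the complement `Π_L(C)⊥` has dimension `Rk L - dim Π_L(C)`. -/

open Matrix

section BlockDotProduct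

variable {R ι : Type*} [CommSemiring R] [Fintype ι] {κ : ι → Type*} [∀ i, Fintype (κ i)]

noncomputable def blockDotForm : LinearMap.BilinForm R ((i : ι) → κ i → R) :=
  ∑ i, (dotProductBilin R R).compl₁₂ (LinearMap.proj i) (LinearMap.proj i)

@[simp]
lemma blockDotForm_apply (x y : (i : ι) → κ i → R) :
    blockDotForm x y = ∑ i, x i ⬝ᵥ y i := by
  simp [blockDotForm]

lemma blockDotForm_nondegenerate : (blockDotForm (R := R) (κ := κ)).Nondegenerate := by
  classical
  have hsingle : ∀ (x : (i : ι) → κ i → R) i t,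
      x i t = ∑ j, x j ⬝ᵥ (Pi.single i (Pi.single t 1) : (j : ι) → κ j → R) j := fun x i t => by
    rw [Finset.sum_eq_single i (fun j _ hj => by simp [Pi.single_eq_of_ne hj]) (by simp),
      Pi.single_eq_same, dotProduct_single, mul_one]
  constructor <;> refine fun x hx => funext fun i => funext fun t => ?_
  · simpa [← hsingle] using hx (Pi.single i (Pi.single t 1))
  · simpa [dotProduct_comm _ (x _), ← hsingle] using hx (Pi.single i (Pi.single t 1))

end BlockDotProduct

lemma LinearMap.IsAdjointPair.orthogonal_map_eq_comap {R M M₁ : Type*} [CommSemiring R]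
    [AddCommMonoid M] [Module R M] [AddCommMonoid M₁] [Module R M₁]
    {B : LinearMap.BilinForm R M} {B₁ : LinearMap.BilinForm R M₁} {f : M →ₗ[R] M₁}
    {g : M₁ →ₗ[R] M} (h : LinearMap.IsAdjointPair B B₁ f g) (C : Submodule R M) :
    B₁.orthogonal (C.map f) = (B.orthogonal C).comap g := by
  ext y
  simp [LinearMap.BilinForm.mem_orthogonal_iff, h _ y]

lemma eq_of_forall_dual_comp_eq {k E m : Type*} [Field k] [AddCommGroup E] [Module k E]
    {u v : m → E} (h : ∀ f : E →ₗ[k] k, f ∘ u = f ∘ v) : u = v := by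
  funext j
  rw [← sub_eq_zero, ← Module.forall_dual_apply_eq_zero_iff k]
  intro f
  simpa [sub_eq_zero] using congrFun (h f) j

namespace Matrix

variable {m r : Type*} [Fintype r]

lemma comp_vecMul_map_algebraMap {k E : Type*} [CommSemiring k] [Semiring E] [Algebra k E]
    (A : Matrix r m k) (f : E →ₗ[k] k) (y : r → E) :
    f ∘ (y ᵥ* A.map (algebraMap k E)) = (f ∘ y) ᵥ* A := by
  ext t
  simp [vecMul, dotProduct, ← Algebra.commutes, ← Algebra.smul_def, mul_comm]

variable {k E : Type*} [Field k] [Ring E] [Algebra k E] {A : Matrix r m k}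

lemma exists_mul_eq_one_of_vecMul_injective [Fintype m] [DecidableEq r] [DecidableEq m]
    (hA : Function.Injective A.vecMul) : ∃ B : Matrix m r k, A * B = 1 := by
  obtain ⟨g, hg⟩ := A.vecMulLinear.exists_leftInverse_of_injective (LinearMap.ker_eq_bot.2 hA)
  refine ⟨(LinearMap.toMatrix' g)ᵀ, ext_iff_vecMul.2 fun v => ?_⟩
  rw [← vecMul_vecMul, vecMul_transpose, LinearMap.toMatrix'_mulVec, vecMul_one]
  exact LinearMap.congr_fun hg v

lemma vecMul_map_algebraMap_injective (hA : Function.Injective A.vecMul) :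
    Function.Injective (A.map (algebraMap k E)).vecMul := by
  intro y y' (h : y ᵥ* _ = y' ᵥ* _)
  exact eq_of_forall_dual_comp_eq fun f => hA (by simp only [← comp_vecMul_map_algebraMap, h])

lemma mem_range_vecMulLinear_map_algebraMap_iff [Fintype m] (hA : Function.Injective A.vecMul)
    (c : m → E) :
    c ∈ LinearMap.range (A.map (algebraMap k E)).vecMulLinear ↔
      ∀ f : E →ₗ[k] k, f ∘ c ∈ LinearMap.range A.vecMulLinear := by
  classical
  constructor
  · rintro ⟨y, rfl⟩ f
    exact ⟨f ∘ y, (comp_vecMul_map_algebraMap A f y).symm⟩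
  · intro hc
    obtain ⟨B, hAB⟩ := exists_mul_eq_one_of_vecMul_injective hA
    -- `B * A` fixes the `k`-row space of `A`, and `k`-functionals separate the points of `E`.
    refine ⟨c ᵥ* B.map (algebraMap k E), ?_⟩
    have hfix : ∀ f : E →ₗ[k] k, f ∘ (c ᵥ* (B * A).map (algebraMap k E)) = f ∘ c := by
      intro f
      obtain ⟨w, hw⟩ := hc f
      rw [comp_vecMul_map_algebraMap, ← hw, vecMulLinear_apply, vecMul_vecMul, ← Matrix.mul_assoc,
        hAB, Matrix.one_mul]
    rw [vecMulLinear_apply, vecMul_vecMul, ← Matrix.map_mul]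
    exact eq_of_forall_dual_comp_eq hfix

end Matrix

noncomputable def SRbasisMatrix (L : SRLat ℓ nv K) (i : Fin ℓ) :
    Matrix (Fin (finrank (K i) (L i))) (Fin (nv i)) (K i) :=
  Matrix.of fun j => (Module.finBasis (K i) (L i) j : Fin (nv i) → K i)

lemma SRbasisMatrix_vecMul_injective (L : SRLat ℓ nv K) (i : Fin ℓ) :
    Function.Injective (SRbasisMatrix L i).vecMul := by
  rw [vecMul_injective_iff]
  exact (Module.finBasis (K i) (L i)).linearIndependent.map' (L i).subtype (L i).ker_subtype

lemma range_vecMulLinear_SRbasisMatrix (L : SRLat ℓ nv K) (i : Fin ℓ) :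
    LinearMap.range (SRbasisMatrix L i).vecMulLinear = L i := by
  rw [range_vecMulLinear, show (SRbasisMatrix L i).row = (L i).subtype ∘ Module.finBasis (K i) (L i)
    from rfl, Set.range_comp, Submodule.span_image, Basis.span_eq, Submodule.map_subtype_top]

lemma SRpi_apply (L : SRLat ℓ nv K) (x : SRAmb ℓ nv F) (i : Fin ℓ) :
    SRpi L x i = x i ᵥ* ((SRbasisMatrix L i).map (algebraMap (K i) F))ᵀ :=
  rfl

noncomputable def SRpsi (L : SRLat ℓ nv K) :
    ((i : Fin ℓ) → Fin (finrank (K i) (L i)) → F) →ₗ[F] SRAmb ℓ nv F :=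
  LinearMap.piMap fun i => ((SRbasisMatrix L i).map (algebraMap (K i) F)).vecMulLinear

lemma isAdjointPair_SRpi_SRpsi (L : SRLat ℓ nv K) :
    LinearMap.IsAdjointPair blockDotForm blockDotForm (SRpi (F := F) L) (SRpsi L) := by
  intro x y
  simp [SRpi_apply, SRpsi, ← mulVec_transpose, dotProduct_mulVec]

lemma SRpsi_injective (L : SRLat ℓ nv K) : Function.Injective (SRpsi (F := F) L) :=
  Function.Injective.piMap fun i =>
    vecMul_map_algebraMap_injective (SRbasisMatrix_vecMul_injective L i)

lemma SRsupp_le_iff (c : SRAmb ℓ nv F) (L : SRLat ℓ nv K) (i : Fin ℓ) :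
    SRsupp c i ≤ L i ↔ ∀ f : F →ₗ[K i] K i, f ∘ c i ∈ L i := by
  rw [SRsupp, Submodule.span_le]
  simp [Set.subset_def, Function.comp_def]

lemma SRVL_eq_range_SRpsi (L : SRLat ℓ nv K) : SRVL L = LinearMap.range (SRpsi (F := F) L) := by
  ext c
  change (∀ i, SRsupp c i ≤ L i) ↔ c ∈ Set.range (SRpsi L)
  rw [SRpsi, LinearMap.coe_piMap, Set.range_piMap, Set.mem_univ_pi]
  refine forall_congr' fun i => ?_
  have h := mem_range_vecMulLinear_map_algebraMap_iff (SRbasisMatrix_vecMul_injective L i) (c i)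
  rw [range_vecMulLinear_SRbasisMatrix] at h
  exact (SRsupp_le_iff c L i).trans h.symm

lemma SRdual_eq_orthogonal (C : Submodule F (SRAmb ℓ nv F)) :
    SRdual C = blockDotForm.orthogonal C := by
  ext x
  rw [LinearMap.BilinForm.mem_orthogonal_iff]
  simp only [blockDotForm_apply, dotProduct_comm _ (x _)]
  rfl

theorem stmt7_dim_piL_general
    {ℓ : ℕ} {nv : Fin ℓ → ℕ}
    {F : Type} [Field F]
    {K : Fin ℓ → Type} [∀ i, Field (K i)]
    [∀ i, Algebra (K i) F]
    (C : Submodule F (SRAmb ℓ nv F)) (L : SRLat ℓ nv K) :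
    Module.finrank F ↥(Submodule.map (SRpi (F := F) L) C) =
      SRrk L - Module.finrank F ↥(SRdual C ⊓ SRVL L) := by
  have hdual : SRdual C ⊓ SRVL L = (blockDotForm.orthogonal (C.map (SRpi L))).map (SRpsi L) := by
    rw [(isAdjointPair_SRpi_SRpsi L).orthogonal_map_eq_comap, Submodule.map_comap_eq,
      SRdual_eq_orthogonal, SRVL_eq_range_SRpsi, inf_comm]
  have hrank : finrank F ((i : Fin ℓ) → Fin (finrank (K i) (L i)) → F) = SRrk L := by
    simp [SRrk, Module.finrank_pi_fintype]
  rw [hdual, ← LinearEquiv.finrank_eq (Submodule.equivMapOfInjective _ (SRpsi_injective L) _),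
    LinearMap.BilinForm.finrank_orthogonal blockDotForm_nondegenerate, hrank]
  have hle := Submodule.finrank_le (C.map (SRpi (F := F) L))
  rw [hrank] at hle
  omega

/-- `dim_F Π_L(C) = Rk(L) − dim_F (C^⊥ ∩ V_L)`. -/
theorem stmt7_dim_piL
    {ℓ : ℕ} (hℓ : 0 < ℓ) {nv : Fin ℓ → ℕ} (hnv : ∀ i, 0 < nv i)
    {F : Type} [Field F] [Finite F]
    {K : Fin ℓ → Type} [∀ i, Field (K i)] [∀ i, Finite (K i)]
    [∀ i, Algebra (K i) F] [∀ i, FiniteDimensional (K i) F]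
    (C : Submodule F (SRAmb ℓ nv F)) (L : SRLat ℓ nv K) :
    Module.finrank F ↥(Submodule.map (SRpi (F := F) L) C) =
      SRrk L - Module.finrank F ↥(SRdual C ⊓ SRVL L) :=
  stmt7_dim_piL_general C L
end

section
/- (Wei-type duality for sum-matroids.) Let M = (K^n, ρ) be a sum-matroid of rank k (i.e., ρ(K^n) = k) and let M* = (K^n, ρ*) be its dual, where n = n_1+⋯+n_ℓ. Let d_i = d_i(M) for i = 1,…,n−k and d_j^⊥ = d_j(M*) for j = 1,…,k. Then {1, 2, …, n} = {d_1^⊥, …, d_k^⊥} ∪ {n+1−d_1, …, n+1−d_{n−k}}, and this union is disjoint. -/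
open Module

variable {ℓ : ℕ} {nv : Fin ℓ → ℕ} {F : Type} [Field F]
  {K : Fin ℓ → Type} [∀ i, Field (K i)] [∀ i, Algebra (K i) F]

/-! Let `g(m) = SRminRho ρ m` be the least value of `ρ` on elements of rank `m`. Submodularity
makes `g` grow by `0` or `1` at each step, from `g(0) = 0` to `g(n) = k`. Since
`η(L) ≤ m - g(m)` for `Rk L = m`, with equality for a minimizer, `d_i` is the first `m` with
`m - g(m) = i`: the generalized weights are the `p + 1` such that `g` does not grow from `p` to
`p + 1`. Dually `η*(L) = k - ρ(L⊥)` and `Rk L⊥ = n - Rk L`, so the dual weights are the `n - p`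
such that `g` grows from `p` to `p + 1`. Thus `n + 1 - d_i` and `d_j^⊥` run through
complementary subsets of `{1, …, n}`. -/

lemma Nat.exists_lt_le_succ_of_lt_of_le {f : ℕ → ℕ} {c n : ℕ} (h0 : f 0 < c) (hn : c ≤ f n) :
    ∃ p < n, f p < c ∧ c ≤ f (p + 1) := by
  induction n with
  | zero => omega
  | succ n ih =>
    by_cases h : c ≤ f n
    · obtain ⟨p, hp, hfp⟩ := ih h
      exact ⟨p, by omega, hfp⟩
    · exact ⟨n, by omega, by omega, hn⟩

lemma dotProductBilin_isRefl {R ι : Type*} [CommRing R] [Fintype ι] :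
    (dotProductBilin R R : LinearMap.BilinForm R (ι → R)).IsRefl := by
  intro v w h
  simpa [dotProduct_comm] using h

lemma dotProductBilin_nondegenerate {R ι : Type*} [CommRing R] [Fintype ι] :
    (dotProductBilin R R : LinearMap.BilinForm R (ι → R)).Nondegenerate :=
  dotProductBilin_isRefl.nondegenerate_iff_separatingLeft.2 fun v hv =>
    dotProduct_eq_zero_iff.1 fun w => by simpa using hv w

lemma SRorth_eq_orthogonal {k : Type} [Field k] {m : ℕ} (W : Submodule k (Fin m → k)) :
    SRorth W = LinearMap.BilinForm.orthogonal (dotProductBilin k k) W := by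
  ext v
  simp [SRorth, LinearMap.BilinForm.mem_orthogonal_iff, dotProduct, mul_comm]

lemma finrank_SRorth {k : Type} [Field k] {m : ℕ} (W : Submodule k (Fin m → k)) :
    finrank k (SRorth W) = m - finrank k W := by
  rw [SRorth_eq_orthogonal, LinearMap.BilinForm.finrank_orthogonal dotProductBilin_nondegenerate,
    finrank_fin_fun]

lemma SRorth_SRorth {k : Type} [Field k] {m : ℕ} (W : Submodule k (Fin m → k)) :
    SRorth (SRorth W) = W := by
  rw [SRorth_eq_orthogonal, SRorth_eq_orthogonal, LinearMap.BilinForm.orthogonal_orthogonal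
    dotProductBilin_nondegenerate (dotProductBilin_isRefl (R := k) (ι := Fin m))]

lemma SRlatPerp_SRlatPerp (L : SRLat ℓ nv K) : SRlatPerp (SRlatPerp L) = L :=
  funext fun i => SRorth_SRorth (L i)

lemma SRrk_top : SRrk (⊤ : SRLat ℓ nv K) = ∑ i, nv i := by
  simp [SRrk]

lemma SRrk_bot : SRrk (⊥ : SRLat ℓ nv K) = 0 := by
  simp [SRrk]

lemma SRrk_add_SRrk_SRlatPerp (L : SRLat ℓ nv K) : SRrk L + SRrk (SRlatPerp L) = ∑ i, nv i := by
  rw [SRrk, SRrk, ← Finset.sum_add_distrib]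
  refine Finset.sum_congr rfl fun i _ => ?_
  have := (L i).finrank_le
  rw [finrank_fin_fun] at this
  rw [SRlatPerp, finrank_SRorth]
  omega

lemma SRrk_sup_add_SRrk_inf (L L' : SRLat ℓ nv K) :
    SRrk (L ⊔ L') + SRrk (L ⊓ L') = SRrk L + SRrk L' := by
  simp only [SRrk, ← Finset.sum_add_distrib]
  exact Finset.sum_congr rfl fun i _ => Submodule.finrank_sup_add_finrank_inf_eq (L i) (L' i)

lemma exists_sup_eq_and_inf_eq_bot_of_le {L L' : SRLat ℓ nv K} (h : L ≤ L') :
    ∃ A, L ⊔ A = L' ∧ L ⊓ A = ⊥ := by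
  choose C hC using fun i => (L i).exists_isCompl
  refine ⟨C ⊓ L', funext fun i => ?_, funext fun i => ?_⟩
  · change L i ⊔ C i ⊓ L' i = L' i
    rw [← sup_inf_assoc_of_le _ (h i), (hC i).sup_eq_top, top_inf_eq]
  · change L i ⊓ (C i ⊓ L' i) = ⊥
    rw [← inf_assoc, (hC i).inf_eq_bot, bot_inf_eq]

lemma SRrk_update (L : SRLat ℓ nv K) (i : Fin ℓ) (W : Submodule (K i) (Fin (nv i) → K i)) :
    SRrk (Function.update L i W) + finrank (K i) (L i) = SRrk L + finrank (K i) W := by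
  simp only [SRrk, ← Finset.add_sum_erase _ _ (Finset.mem_univ i)]
  rw [Function.update_self, Finset.sum_congr rfl fun j hj => by
    rw [Function.update_of_ne (Finset.ne_of_mem_erase hj)]]
  ring

lemma exists_SRrk_eq_succ {L L' : SRLat ℓ nv K} (h : L ≤ L') (hlt : SRrk L < SRrk L') :
    ∃ M, L ≤ M ∧ M ≤ L' ∧ SRrk M = SRrk L + 1 := by
  obtain ⟨i, -, hi⟩ := Finset.exists_lt_of_sum_lt hlt
  obtain ⟨x, hxL', hxL⟩ := SetLike.exists_of_lt (Submodule.lt_of_le_of_finrank_lt_finrank (h i) hi)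
  refine ⟨Function.update L i (L i ⊔ Submodule.span (K i) {x}), ?_, ?_, ?_⟩
  · exact le_update_iff.2 ⟨le_sup_left, fun j _ => le_rfl⟩
  · exact update_le_iff.2 ⟨sup_le (h i) (Submodule.span_singleton_le_iff_mem _ _ |>.2 hxL'),
      fun j _ => h j⟩
  · have := SRrk_update L i (L i ⊔ Submodule.span (K i) {x})
    rw [Submodule.finrank_sup_span_singleton hxL] at this
    omega

lemma exists_SRrk_eq {L L' : SRLat ℓ nv K} (h : L ≤ L') {m : ℕ} (hLm : SRrk L ≤ m)
    (hmL' : m ≤ SRrk L') : ∃ M, L ≤ M ∧ M ≤ L' ∧ SRrk M = m := by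
  induction m, hLm using Nat.le_induction with
  | base => exact ⟨L, le_rfl, h, rfl⟩
  | succ m hLm ih =>
    obtain ⟨M, hLM, hML', rfl⟩ := ih (by omega)
    obtain ⟨M', hMM', hM'L', hM'⟩ := exists_SRrk_eq_succ hML' (by omega)
    exact ⟨M', hLM.trans hMM', hM'L', hM'⟩

section SumMatroid

variable {ρ : SRLat ℓ nv K → ℕ}

lemma SRgw_eq {i m : ℕ} (hex : ∃ L, SReta ρ L = i ∧ SRrk L = m)
    (hmin : ∀ L, SReta ρ L = i → m ≤ SRrk L) : SRgw ρ i = m :=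
  IsLeast.csInf_eq ⟨hex, by rintro _ ⟨L, hL, rfl⟩; exact hmin L hL⟩

lemma IsSumMatroid.add_SRrk_le_add_SRrk (hρ : IsSumMatroid ρ) {L L' : SRLat ℓ nv K} (h : L ≤ L') :
    ρ L' + SRrk L ≤ ρ L + SRrk L' := by
  obtain ⟨A, hsup, hinf⟩ := exists_sup_eq_and_inf_eq_bot_of_le h
  have hsubmod := hρ.2.2 L A
  have hA := hρ.1 A
  have hrk := SRrk_sup_add_SRrk_inf L A
  rw [hsup, hinf, SRrk_bot] at hrk
  rw [hsup] at hsubmod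
  omega

lemma IsSumMatroid.SReta_SRdualRk (hρ : IsSumMatroid ρ) (L : SRLat ℓ nv K) :
    SReta (SRdualRk ρ) L = ρ ⊤ - ρ (SRlatPerp L) := by
  have h1 := hρ.add_SRrk_le_add_SRrk (le_top : SRlatPerp L ≤ ⊤)
  have h2 := hρ.2.1 _ _ (le_top : SRlatPerp L ≤ ⊤)
  have h3 := SRrk_add_SRrk_SRlatPerp L
  rw [SRrk_top] at h1
  unfold SReta SRdualRk
  omega

noncomputable def SRminRho (ρ : SRLat ℓ nv K → ℕ) (m : ℕ) : ℕ :=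
  sInf {s | ∃ L : SRLat ℓ nv K, SRrk L = m ∧ ρ L = s}

lemma SRminRho_le (L : SRLat ℓ nv K) : SRminRho ρ (SRrk L) ≤ ρ L :=
  Nat.sInf_le ⟨L, rfl, rfl⟩

lemma exists_SRminRho_eq {m : ℕ} (hm : m ≤ ∑ i, nv i) :
    ∃ L : SRLat ℓ nv K, SRrk L = m ∧ ρ L = SRminRho ρ m := by
  obtain ⟨L, -, -, hL⟩ := exists_SRrk_eq (bot_le : (⊥ : SRLat ℓ nv K) ≤ ⊤)
    (SRrk_bot (nv := nv) (K := K) ▸ m.zero_le) (SRrk_top (K := K) ▸ hm)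
  have hne : {s | ∃ L : SRLat ℓ nv K, SRrk L = m ∧ ρ L = s}.Nonempty := ⟨ρ L, L, hL, rfl⟩
  exact Nat.sInf_mem hne

lemma IsSumMatroid.SRminRho_le_self (hρ : IsSumMatroid ρ) {m : ℕ} (hm : m ≤ ∑ i, nv i) :
    SRminRho ρ m ≤ m := by
  obtain ⟨L, rfl, hL⟩ := exists_SRminRho_eq (ρ := ρ) hm
  exact hL ▸ hρ.1 L

lemma IsSumMatroid.SRminRho_mono (hρ : IsSumMatroid ρ) {m m' : ℕ} (h : m ≤ m')
    (hm' : m' ≤ ∑ i, nv i) : SRminRho ρ m ≤ SRminRho ρ m' := by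
  obtain ⟨L', rfl, hL'⟩ := exists_SRminRho_eq (ρ := ρ) hm'
  obtain ⟨L, -, hLL', rfl⟩ := exists_SRrk_eq (bot_le : ⊥ ≤ L') (by rw [SRrk_bot]; omega) h
  exact hL' ▸ (SRminRho_le L).trans (hρ.2.1 L L' hLL')

lemma IsSumMatroid.SRminRho_add_le (hρ : IsSumMatroid ρ) {m m' : ℕ} (h : m ≤ m')
    (hm' : m' ≤ ∑ i, nv i) : SRminRho ρ m' + m ≤ SRminRho ρ m + m' := by
  obtain ⟨L, rfl, hL⟩ := exists_SRminRho_eq (ρ := ρ) (h.trans hm')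
  obtain ⟨L', hLL', -, rfl⟩ := exists_SRrk_eq (le_top : L ≤ ⊤) h (by rwa [SRrk_top])
  have := hρ.add_SRrk_le_add_SRrk hLL'
  have := SRminRho_le (ρ := ρ) L'
  omega

lemma IsSumMatroid.SRminRho_top (hρ : IsSumMatroid ρ) :
    SRminRho ρ (∑ i, nv i) = ρ ⊤ := by
  obtain ⟨L, hL, hLρ⟩ := exists_SRminRho_eq (ρ := ρ) le_rfl
  have hle := hρ.add_SRrk_le_add_SRrk (le_top : L ≤ ⊤)
  have hge := SRminRho_le (ρ := ρ) (⊤ : SRLat ℓ nv K)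
  rw [SRrk_top] at hle hge
  omega

lemma IsSumMatroid.SRminRho_succ_eq_or (hρ : IsSumMatroid ρ) {p : ℕ} (hp : p < ∑ i, nv i) :
    SRminRho ρ (p + 1) = SRminRho ρ p ∨ SRminRho ρ (p + 1) = SRminRho ρ p + 1 := by
  have := hρ.SRminRho_mono (p.le_add_right 1) hp
  have := hρ.SRminRho_add_le (p.le_add_right 1) hp
  omega

lemma IsSumMatroid.SRgw_eq_of_flat (hρ : IsSumMatroid ρ) {p : ℕ} (hp : p < ∑ i, nv i)
    (hflat : SRminRho ρ (p + 1) = SRminRho ρ p) :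
    SRgw ρ (p + 1 - SRminRho ρ p) = p + 1 := by
  obtain ⟨L, hL, hLρ⟩ := exists_SRminRho_eq (ρ := ρ) hp
  have hgp := hρ.SRminRho_le_self hp.le
  refine SRgw_eq ⟨L, by rw [SReta, hL, hLρ, hflat], hL⟩ fun L' hL' => ?_
  by_contra! hlt
  have := hρ.SRminRho_add_le (show SRrk L' ≤ p by omega) hp.le
  have := SRminRho_le (ρ := ρ) L'
  unfold SReta at hL'
  omega

lemma IsSumMatroid.SRgw_SRdualRk_eq_of_rise (hρ : IsSumMatroid ρ) {p : ℕ} (hp : p < ∑ i, nv i)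
    (hrise : SRminRho ρ (p + 1) = SRminRho ρ p + 1) :
    SRgw (SRdualRk ρ) (ρ ⊤ - SRminRho ρ p) = ∑ i, nv i - p := by
  have hgk := hρ.SRminRho_top ▸ hρ.SRminRho_mono (Order.add_one_le_of_lt hp) le_rfl
  obtain ⟨L, hL, hLρ⟩ := exists_SRminRho_eq (ρ := ρ) hp.le
  refine SRgw_eq ⟨SRlatPerp L, ?_, ?_⟩ fun L' hL' => ?_
  · rw [hρ.SReta_SRdualRk, SRlatPerp_SRlatPerp, hLρ]
  · have := SRrk_add_SRrk_SRlatPerp L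
    omega
  · rw [hρ.SReta_SRdualRk] at hL'
    have := hρ.2.1 _ _ (le_top : SRlatPerp L' ≤ ⊤)
    have := SRminRho_le (ρ := ρ) (SRlatPerp L')
    have := SRrk_add_SRrk_SRlatPerp L'
    have hle : SRrk (SRlatPerp L') ≤ p := by
      by_contra! h
      have := hρ.SRminRho_mono (show p + 1 ≤ SRrk (SRlatPerp L') by omega) (by omega)
      omega
    omega

lemma IsSumMatroid.SRgw_image_eq (hρ : IsSumMatroid ρ) :
    SRgw ρ '' Set.Icc 1 (∑ i, nv i - ρ ⊤) =
      (· + 1) '' {p | p < ∑ i, nv i ∧ SRminRho ρ (p + 1) = SRminRho ρ p} := by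
  have htop := hρ.SRminRho_top
  ext m
  constructor
  · rintro ⟨r, ⟨hr1, hr2⟩, rfl⟩
    have hzero := hρ.SRminRho_le_self (Nat.zero_le (∑ i, nv i))
    obtain ⟨p, hp, hlt, hle⟩ := Nat.exists_lt_le_succ_of_lt_of_le (n := ∑ i, nv i)
      (f := fun m => m - SRminRho ρ m) (c := r) (by omega) (by omega)
    have := hρ.SRminRho_succ_eq_or hp
    have hflat : SRminRho ρ (p + 1) = SRminRho ρ p := by omega
    refine ⟨p, ⟨hp, hflat⟩, ?_⟩
    rw [show r = p + 1 - SRminRho ρ p by omega, hρ.SRgw_eq_of_flat hp hflat]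
  · rintro ⟨p, ⟨hp, hflat⟩, rfl⟩
    have := hρ.SRminRho_le_self hp.le
    have := hρ.SRminRho_add_le (Order.add_one_le_of_lt hp) le_rfl
    exact ⟨p + 1 - SRminRho ρ p, ⟨by omega, by omega⟩, hρ.SRgw_eq_of_flat hp hflat⟩

lemma IsSumMatroid.SRgw_SRdualRk_image_eq (hρ : IsSumMatroid ρ) :
    SRgw (SRdualRk ρ) '' Set.Icc 1 (ρ ⊤) =
      (∑ i, nv i - ·) '' {p | p < ∑ i, nv i ∧ SRminRho ρ (p + 1) = SRminRho ρ p + 1} := by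
  have htop := hρ.SRminRho_top
  ext m
  constructor
  · rintro ⟨j, ⟨hj1, hj2⟩, rfl⟩
    have hzero := hρ.SRminRho_le_self (Nat.zero_le (∑ i, nv i))
    obtain ⟨p, hp, hlt, hle⟩ := Nat.exists_lt_le_succ_of_lt_of_le (n := ∑ i, nv i)
      (f := SRminRho ρ) (c := ρ ⊤ - j + 1) (by omega) (by omega)
    have := hρ.SRminRho_succ_eq_or hp
    have hrise : SRminRho ρ (p + 1) = SRminRho ρ p + 1 := by omega
    refine ⟨p, ⟨hp, hrise⟩, ?_⟩
    rw [show j = ρ ⊤ - SRminRho ρ p by omega, hρ.SRgw_SRdualRk_eq_of_rise hp hrise]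
  · rintro ⟨p, ⟨hp, hrise⟩, rfl⟩
    have := hρ.SRminRho_mono (Order.add_one_le_of_lt hp) le_rfl
    exact ⟨ρ ⊤ - SRminRho ρ p, ⟨by omega, by omega⟩, hρ.SRgw_SRdualRk_eq_of_rise hp hrise⟩

end SumMatroid

theorem stmt13_wei_duality_matroid_general
    {ℓ : ℕ} {nv : Fin ℓ → ℕ}
    {K : Fin ℓ → Type} [∀ i, Field (K i)]
    (ρ : SRLat ℓ nv K → ℕ) (hρ : IsSumMatroid ρ)
    (k : ℕ) (hk : ρ (⊤ : SRLat ℓ nv K) = k) :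
    (Set.Icc 1 (∑ i, nv i) : Set ℕ) =
        (fun j => SRgw (SRdualRk ρ) j) '' Set.Icc 1 k ∪
          (fun r => (∑ i, nv i) + 1 - SRgw ρ r) '' Set.Icc 1 ((∑ i, nv i) - k) ∧
      Disjoint ((fun j => SRgw (SRdualRk ρ) j) '' Set.Icc 1 k)
        ((fun r => (∑ i, nv i) + 1 - SRgw ρ r) '' Set.Icc 1 ((∑ i, nv i) - k)) := by
  subst hk
  rw [← Set.image_image (fun d => ∑ i, nv i + 1 - d), hρ.SRgw_image_eq, Set.image_image,
    hρ.SRgw_SRdualRk_image_eq, Set.disjoint_left]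
  constructor
  · ext m
    simp only [Set.mem_Icc, Set.mem_union, Set.mem_image, Set.mem_ofPred_eq]
    constructor
    · rintro ⟨hm1, hmn⟩
      rcases hρ.SRminRho_succ_eq_or (p := ∑ i, nv i - m) (by omega) with h | h
      · exact .inr ⟨_, ⟨by omega, h⟩, by omega⟩
      · exact .inl ⟨_, ⟨by omega, h⟩, by omega⟩
    · rintro (⟨p, ⟨hp, -⟩, rfl⟩ | ⟨p, ⟨hp, -⟩, rfl⟩) <;> omega
  · rintro _ ⟨p, ⟨hp, hrise⟩, rfl⟩ ⟨p', ⟨hp', hflat⟩, hpp'⟩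
    dsimp only at hpp'
    obtain rfl : p' = p := by omega
    omega

/-- Wei-type duality for sum-matroids: For a sum-matroid `M` of
rank `k` on `P(K^n)` with dual `M*`,
`{1, …, n} = {d_1^⊥, …, d_k^⊥} ∪ {n+1−d_1, …, n+1−d_{n−k}}`
and the union is disjoint. -/
theorem stmt13_wei_duality_matroid
    {ℓ : ℕ} (hℓ : 0 < ℓ) {nv : Fin ℓ → ℕ} (hnv : ∀ i, 0 < nv i)
    {F : Type} [Field F] [Finite F]
    {K : Fin ℓ → Type} [∀ i, Field (K i)] [∀ i, Finite (K i)]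
    [∀ i, Algebra (K i) F] [∀ i, FiniteDimensional (K i) F]
    (ρ : SRLat ℓ nv K → ℕ) (hρ : IsSumMatroid ρ)
    (k : ℕ) (hk : ρ (⊤ : SRLat ℓ nv K) = k) :
    (Set.Icc 1 (∑ i, nv i) : Set ℕ) =
        (fun j => SRgw (SRdualRk ρ) j) '' Set.Icc 1 k ∪
          (fun r => (∑ i, nv i) + 1 - SRgw ρ r) '' Set.Icc 1 ((∑ i, nv i) - k) ∧
      Disjoint ((fun j => SRgw (SRdualRk ρ) j) '' Set.Icc 1 k)
        ((fun r => (∑ i, nv i) + 1 - SRgw ρ r) '' Set.Icc 1 ((∑ i, nv i) - k)) :=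
  stmt13_wei_duality_matroid_general ρ hρ k hk
end
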